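/- Let d_a (a = 1,…,n) be nonzero real numbers, let λ₁ > ⋯ > λₙ > 0, and let Q be an n×n matrix. Let U be the n×n matrix with U_{a,m} = λ_a^{2m−1}, and let V be the n×n matrix with V_{b,m} = d_b(∑_{a=1}^n Q_{b,a}λ_a^{2m−1} − λ_b^{2m−1}). Suppose that Uᵀ V = 0. Then Q is the identity matrix. -/
import Mathlib

open Matrix in
theorem Q_eq_one_of_UtV_zero (n : ℕ) (hn : 0 < n) (lam : Fin n → ℝ) (d : Fin n → ℝ)
    (hmono : ∀ i j : Fin n, i < j → lam j < lam i) (hpos : ∀ i, 0 < lam i)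
    (hd : ∀ b, d b ≠ 0) (Q : Matrix (Fin n) (Fin n) ℝ)
    (h : (Matrix.of fun a m : Fin n => lam a ^ (2 * (m : ℕ) + 1))ᵀ *
        (Matrix.of fun b m : Fin n =>
          d b * ((∑ a : Fin n, Q b a * lam a ^ (2 * (m : ℕ) + 1)) - lam b ^ (2 * (m : ℕ) + 1)))
      = 0) : Q = 1 := by
  set U : Matrix (Fin n) (Fin n) ℝ :=
    Matrix.of fun a m : Fin n => lam a ^ (2 * (m : ℕ) + 1) with hUdef
  have hU : U = Matrix.diagonal lam * Matrix.vandermonde (fun a => lam a ^ 2) := by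
    ext a m
    simp [hUdef, Matrix.mul_apply, Matrix.diagonal, Matrix.vandermonde,
      Finset.sum_ite_eq, pow_succ, pow_mul, mul_pow, mul_comm]
  have hdetU : IsUnit U.det := by
    rw [hU, Matrix.det_mul, Matrix.det_diagonal, Matrix.det_vandermonde]
    refine (mul_ne_zero ?_ ?_).isUnit
    · exact Finset.prod_ne_zero_iff.2 fun i _ => (hpos i).ne'
    · refine Finset.prod_ne_zero_iff.2 fun i _ => Finset.prod_ne_zero_iff.2 fun j hj => ?_
      have hij : i < j := Finset.mem_Ioi.1 hj
      have : lam j ^ 2 < lam i ^ 2 :=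
        pow_lt_pow_left₀ (hmono i j hij) (hpos j).le (by norm_num)
      exact sub_ne_zero.2 this.ne
  have hV : (Matrix.of fun b m : Fin n =>
          d b * ((∑ a : Fin n, Q b a * lam a ^ (2 * (m : ℕ) + 1)) - lam b ^ (2 * (m : ℕ) + 1)))
      = Matrix.diagonal d * ((Q - 1) * U) := by
    ext b m
    simp [Matrix.mul_apply, Matrix.diagonal, Matrix.sub_apply, Matrix.one_apply, sub_mul,
      Finset.sum_sub_distrib, Finset.sum_ite_eq, hUdef]
  rw [hV, ← Matrix.mul_assoc] at h
  have hdetUt : IsUnit Uᵀ.det := by rwa [Matrix.det_transpose]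
  have e1 : Uᵀ * (Matrix.diagonal d * (Q - 1)) = 0 := by
    have := congrArg (fun M => M * U⁻¹) h
    simpa [Matrix.mul_assoc, Matrix.mul_nonsing_inv _ hdetU] using this
  have h2 : Matrix.diagonal d * (Q - 1) = 0 := by
    have := congrArg (fun M => Uᵀ⁻¹ * M) e1
    simpa [← Matrix.mul_assoc, Matrix.nonsing_inv_mul _ hdetUt] using this
  have h3 : Q - 1 = 0 := by
    ext b a
    have := congrFun (congrFun h2 b) a
    simp [Matrix.mul_apply, Matrix.diagonal, Finset.sum_ite_eq] at this
    rcases this with h' | h'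
    · exact absurd h' (hd b)
    · simpa using h'
  exact sub_eq_zero.1 h3
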